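/- The denominators (n_i·t_{i+1})(n_i·t_{i+2}) are nonzero, so the symmetric matrices T_i are well defined; they satisfy n_jᵀ T_i n_j = δ_{ij} for all i, j ∈ {1,2,3}, and consequently (T₁, T₂, T₃) is a basis of 𝕊. -/

import Mathlib

/-! Each normal `n_j` is orthogonal to its own edge direction `t_j` but, the triangle being
nondegenerate, to neither of the other two. Hence
`n_jᵀ T_i n_j = (n_j·t_{i+1})(n_j·t_{i+2}) / ((n_i·t_{i+1})(n_i·t_{i+2}))` is `1` for `j = i`
and `0` otherwise, as one of the factors is `n_j·t_j`. The functionals `A ↦ n_jᵀ A n_j` are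
therefore dual to `(T_i)`, which is thus linearly independent, and spans `𝕊` because
`dim 𝕊 = 3`. -/

open Matrix

noncomputable section

/-- `n i` is the outward unit normal on the edge `e_i = [x_{i+1}, x_{i+2}]`. -/
def IsOuterNormal (x n : Fin 3 → Fin 2 → ℝ) : Prop :=
  ∀ i : Fin 3, n i ⬝ᵥ n i = 1 ∧ n i ⬝ᵥ (x (i + 2) - x (i + 1)) = 0 ∧
    0 < n i ⬝ᵥ (x (i + 1) - x i)

/-- The symmetric part `sym(A) = (A + Aᵀ)/2`. -/
def symPart (A : Matrix (Fin 2) (Fin 2) ℝ) : Matrix (Fin 2) (Fin 2) ℝ :=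
  (1 / 2 : ℝ) • (A + Aᵀ)

/-- `T_i = sym(t_{i+1} t_{i+2}ᵀ) / ((n_i·t_{i+1})(n_i·t_{i+2}))`. -/
def TT (t n : Fin 3 → Fin 2 → ℝ) (i : Fin 3) : Matrix (Fin 2) (Fin 2) ℝ :=
  ((n i ⬝ᵥ t (i + 1)) * (n i ⬝ᵥ t (i + 2)))⁻¹ • symPart (vecMulVec (t (i + 1)) (t (i + 2)))

namespace Fin3

lemma add_one_add_one (i : Fin 3) : i + 1 + 1 = i + 2 := by fin_cases i <;> rfl

lemma add_one_add_two (i : Fin 3) : i + 1 + 2 = i := by fin_cases i <;> rfl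

lemma add_two_add_one (i : Fin 3) : i + 2 + 1 = i := by fin_cases i <;> rfl

lemma add_two_add_two (i : Fin 3) : i + 2 + 2 = i + 1 := by fin_cases i <;> rfl

lemma eq_add_one_or_eq_add_two_of_ne {i j : Fin 3} (h : i ≠ j) : j = i + 1 ∨ j = i + 2 := by
  fin_cases i <;> fin_cases j <;> simp_all

end Fin3

section DotProduct

variable {ι K : Type*} [Fintype ι] [Field K] {u v w : ι → K} {c : K}

lemma dotProduct_eq_zero_of_eq_smul (hv : v = c • u) (hv0 : v ≠ 0) (h : w ⬝ᵥ v = 0) :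
    w ⬝ᵥ u = 0 := by
  have hc : c ≠ 0 := by rintro rfl; exact hv0 (by rw [hv, zero_smul])
  rw [hv, dotProduct_smul, smul_eq_mul] at h
  exact (mul_eq_zero.1 h).resolve_left hc

lemma dotProduct_ne_zero_of_eq_smul (hv : v = c • u) (h : w ⬝ᵥ v ≠ 0) : w ⬝ᵥ u ≠ 0 := by
  intro h0
  rw [hv, dotProduct_smul, h0, smul_zero] at h
  exact h rfl

end DotProduct

namespace IsOuterNormal

variable {x t n : Fin 3 → Fin 2 → ℝ}

lemma edge_ne_zero (hn : IsOuterNormal x n) (i : Fin 3) : x (i + 2) - x (i + 1) ≠ 0 := by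
  have h := (hn (i + 1)).2.2
  rw [Fin3.add_one_add_one] at h
  intro h0
  rw [h0, dotProduct_zero] at h
  exact lt_irrefl 0 h

lemma dotProduct_tangent_self (hn : IsOuterNormal x n)
    (ht_par : ∀ i, ∃ c : ℝ, x (i + 2) - x (i + 1) = c • t i) (i : Fin 3) : n i ⬝ᵥ t i = 0 := by
  obtain ⟨c, hc⟩ := ht_par i
  exact dotProduct_eq_zero_of_eq_smul hc (hn.edge_ne_zero i) (hn i).2.1

lemma dotProduct_tangent_add_two_ne_zero (hn : IsOuterNormal x n)
    (ht_par : ∀ i, ∃ c : ℝ, x (i + 2) - x (i + 1) = c • t i) (i : Fin 3) :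
    n i ⬝ᵥ t (i + 2) ≠ 0 := by
  obtain ⟨c, hc⟩ := ht_par (i + 2)
  rw [Fin3.add_two_add_two, Fin3.add_two_add_one] at hc
  exact dotProduct_ne_zero_of_eq_smul hc (hn i).2.2.ne'

lemma dotProduct_tangent_add_one_ne_zero (hn : IsOuterNormal x n)
    (ht_par : ∀ i, ∃ c : ℝ, x (i + 2) - x (i + 1) = c • t i) (i : Fin 3) :
    n i ⬝ᵥ t (i + 1) ≠ 0 := by
  obtain ⟨c, hc⟩ := ht_par (i + 1)
  rw [Fin3.add_one_add_two, Fin3.add_one_add_one] at hc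
  refine dotProduct_ne_zero_of_eq_smul hc ?_
  have h_along := (hn i).2.1
  have h_across := (hn i).2.2
  simp only [dotProduct_sub] at h_along h_across ⊢
  linarith

lemma dotProduct_tangent_mul_ne_zero (hn : IsOuterNormal x n)
    (ht_par : ∀ i, ∃ c : ℝ, x (i + 2) - x (i + 1) = c • t i) (i : Fin 3) :
    (n i ⬝ᵥ t (i + 1)) * (n i ⬝ᵥ t (i + 2)) ≠ 0 :=
  mul_ne_zero (hn.dotProduct_tangent_add_one_ne_zero ht_par i)
    (hn.dotProduct_tangent_add_two_ne_zero ht_par i)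

end IsOuterNormal

lemma transpose_symPart (A : Matrix (Fin 2) (Fin 2) ℝ) : (symPart A)ᵀ = symPart A := by
  rw [symPart, transpose_smul, transpose_add, transpose_transpose, add_comm]

lemma dotProduct_symPart_vecMulVec_mulVec (u v w : Fin 2 → ℝ) :
    w ⬝ᵥ symPart (vecMulVec u v) *ᵥ w = (w ⬝ᵥ u) * (w ⬝ᵥ v) := by
  simp only [symPart, transpose_vecMulVec, smul_mulVec, add_mulVec, vecMulVec_mulVec,
    dotProduct_smul, dotProduct_add, op_smul_eq_smul, smul_eq_mul]
  rw [dotProduct_comm v w, dotProduct_comm u w]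
  ring

lemma transpose_TT (t n : Fin 3 → Fin 2 → ℝ) (i : Fin 3) : (TT t n i)ᵀ = TT t n i := by
  rw [TT, transpose_smul, transpose_symPart]

lemma dotProduct_TT_mulVec (t n : Fin 3 → Fin 2 → ℝ) (i : Fin 3) (w : Fin 2 → ℝ) :
    w ⬝ᵥ TT t n i *ᵥ w =
      (w ⬝ᵥ t (i + 1)) * (w ⬝ᵥ t (i + 2)) / ((n i ⬝ᵥ t (i + 1)) * (n i ⬝ᵥ t (i + 2))) := by
  rw [TT, smul_mulVec, dotProduct_smul, smul_eq_mul, dotProduct_symPart_vecMulVec_mulVec,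
    inv_mul_eq_div]

lemma IsOuterNormal.dotProduct_TT_mulVec_eq_ite {x t n : Fin 3 → Fin 2 → ℝ}
    (hn : IsOuterNormal x n)
    (ht_par : ∀ i, ∃ c : ℝ, x (i + 2) - x (i + 1) = c • t i) (i j : Fin 3) :
    n j ⬝ᵥ TT t n i *ᵥ n j = if i = j then 1 else 0 := by
  rw [dotProduct_TT_mulVec]
  split_ifs with hij
  · subst hij
    exact div_self (hn.dotProduct_tangent_mul_ne_zero ht_par i)
  · rcases Fin3.eq_add_one_or_eq_add_two_of_ne hij with rfl | rfl <;>
      simp [hn.dotProduct_tangent_self ht_par]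

def quadFormAt {ι R : Type*} [Fintype ι] [CommSemiring R] (w : ι → R) :
    Module.Dual R (Matrix ι ι R) where
  toFun A := w ⬝ᵥ A *ᵥ w
  map_add' A B := by rw [add_mulVec, dotProduct_add]
  map_smul' c A := by rw [smul_mulVec, dotProduct_smul, RingHom.id_apply]

@[simp]
lemma quadFormAt_apply {ι R : Type*} [Fintype ι] [CommSemiring R] (w : ι → R)
    (A : Matrix ι ι R) : quadFormAt w A = w ⬝ᵥ A *ᵥ w :=
  rfl

namespace Matrix

lemma IsSymm.mem_span_fin_two {S : Matrix (Fin 2) (Fin 2) ℝ} (hS : S.IsSymm) :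
    S ∈ Submodule.span ℝ (Set.range ![!![1, 0; 0, 0], !![0, 0; 0, 1], !![0, 1; 1, 0]]) := by
  refine (Submodule.mem_span_range_iff_exists_fun ℝ).2 ⟨![S 0 0, S 1 1, S 0 1], ?_⟩
  have h10 : S 1 0 = S 0 1 := by simpa using congrFun (congrFun hS 0) 1
  ext i j
  fin_cases i <;> fin_cases j <;> simp [Fin.sum_univ_three, h10]

lemma IsSymm.mem_span_of_linearIndependent {T : Fin 3 → Matrix (Fin 2) (Fin 2) ℝ}
    (hT : LinearIndependent ℝ T) (hT_symm : ∀ i, (T i).IsSymm)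
    {S : Matrix (Fin 2) (Fin 2) ℝ} (hS : S.IsSymm) : S ∈ Submodule.span ℝ (Set.range T) := by
  have hle : Submodule.span ℝ (Set.range T) ≤
      Submodule.span ℝ (Set.range ![!![1, 0; 0, 0], !![0, 0; 0, 1], !![0, 1; 1, 0]]) :=
    Submodule.span_le.2 <| Set.range_subset_iff.2 fun i => (hT_symm i).mem_span_fin_two
  rw [Submodule.eq_of_le_of_finrank_le hle
    ((finrank_range_le_card _).trans (finrank_span_eq_card hT).ge)]
  exact hS.mem_span_fin_two

end Matrix

theorem TT_basis_general
    (x t n : Fin 3 → Fin 2 → ℝ)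
    (hn : IsOuterNormal x n)
    (ht_par : ∀ i, ∃ c : ℝ, x (i + 2) - x (i + 1) = c • t i) :
    (∀ i : Fin 3, (n i ⬝ᵥ t (i + 1)) * (n i ⬝ᵥ t (i + 2)) ≠ 0) ∧
    (∀ i j : Fin 3, n j ⬝ᵥ (TT t n i).mulVec (n j) = if i = j then (1 : ℝ) else 0) ∧
    LinearIndependent ℝ (TT t n) ∧
    (∀ S : Matrix (Fin 2) (Fin 2) ℝ, Sᵀ = S →
      ∃ c : Fin 3 → ℝ, S = ∑ i : Fin 3, c i • TT t n i) := by
  have hdelta := hn.dotProduct_TT_mulVec_eq_ite ht_par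
  have hli : LinearIndependent ℝ (TT t n) :=
    .of_pairwise_dual_eq_zero_one _ (fun j => quadFormAt (n j))
      (fun j i hji => by simpa [hji.symm] using hdelta i j) (fun i => by simpa using hdelta i i)
  refine ⟨hn.dotProduct_tangent_mul_ne_zero ht_par, hdelta, hli, fun S hS => ?_⟩
  obtain ⟨c, hc⟩ := (Submodule.mem_span_range_iff_exists_fun ℝ).1 <|
    Matrix.IsSymm.mem_span_of_linearIndependent hli (transpose_TT t n) hS
  exact ⟨c, hc.symm⟩

/-- The denominators `(n_i·t_{i+1})(n_i·t_{i+2})` are nonzero, the matrices `T_i`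
satisfy `n_jᵀ T_i n_j = δ_{ij}`, and `(T₁, T₂, T₃)` is a basis of the space `𝕊`
of symmetric 2×2 matrices. -/
theorem TT_basis
    (x t n : Fin 3 → Fin 2 → ℝ)
    (hx : AffineIndependent ℝ x)
    (hn : IsOuterNormal x n)
    (ht_unit : ∀ i, t i ⬝ᵥ t i = 1)
    (ht_par : ∀ i, ∃ c : ℝ, x (i + 2) - x (i + 1) = c • t i) :
    (∀ i : Fin 3, (n i ⬝ᵥ t (i + 1)) * (n i ⬝ᵥ t (i + 2)) ≠ 0) ∧
    (∀ i j : Fin 3, n j ⬝ᵥ (TT t n i).mulVec (n j) = if i = j then (1 : ℝ) else 0) ∧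
    LinearIndependent ℝ (TT t n) ∧
    (∀ S : Matrix (Fin 2) (Fin 2) ℝ, Sᵀ = S →
      ∃ c : Fin 3 → ℝ, S = ∑ i : Fin 3, c i • TT t n i) :=
  TT_basis_general x t n hn ht_par
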